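/- For any element b of the solvable Lie algebra b = span{E1,E2,E3,E31,E32,A1,A2,A3,A31,A32} and any linear form η on b with η(E3) > 0, every coadjoint transform of η also pairs positively with E3; consequently the coadjoint orbit of the restriction of −(E1*+E2*+E3*) to b and the coadjoint orbit of the restriction of (E1*+E2*+E3*) to b under the connected group B = exp(b) are disjoint. -/

import Mathlib

open Matrix

abbrev M6 := Matrix (Fin 6) (Fin 6) ℝ

noncomputable def E1 : M6 := !![0,0,0,1,0,0; 0,0,0,0,0,0; 0,0,0,0,0,0; 0,0,0,0,0,0; 0,0,0,0,0,0; 0,0,0,0,0,0]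
noncomputable def E2 : M6 := !![0,0,0,0,0,0; 0,0,0,0,1,0; 0,0,0,0,0,0; 0,0,0,0,0,0; 0,0,0,0,0,0; 0,0,0,0,0,0]
noncomputable def E3 : M6 := !![0,0,0,0,0,0; 0,0,0,0,0,0; 0,0,0,0,0,1; 0,0,0,0,0,0; 0,0,0,0,0,0; 0,0,0,0,0,0]
noncomputable def E31 : M6 := !![0,0,0,0,0,1; 0,0,0,0,0,0; 0,0,0,1,0,0; 0,0,0,0,0,0; 0,0,0,0,0,0; 0,0,0,0,0,0]
noncomputable def E32 : M6 := !![0,0,0,0,0,0; 0,0,0,0,0,1; 0,0,0,0,1,0; 0,0,0,0,0,0; 0,0,0,0,0,0; 0,0,0,0,0,0]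
noncomputable def A1 : M6 := !![(1/2),0,0,0,0,0; 0,0,0,0,0,0; 0,0,0,0,0,0; 0,0,0,(-1/2),0,0; 0,0,0,0,0,0; 0,0,0,0,0,0]
noncomputable def A2 : M6 := !![0,0,0,0,0,0; 0,(1/2),0,0,0,0; 0,0,0,0,0,0; 0,0,0,0,0,0; 0,0,0,0,(-1/2),0; 0,0,0,0,0,0]
noncomputable def A3 : M6 := !![0,0,0,0,0,0; 0,0,0,0,0,0; 0,0,(1/2),0,0,0; 0,0,0,0,0,0; 0,0,0,0,0,0; 0,0,0,0,0,(-1/2)]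
noncomputable def A31 : M6 := !![0,0,0,0,0,0; 0,0,0,0,0,0; 1,0,0,0,0,0; 0,0,0,0,0,-1; 0,0,0,0,0,0; 0,0,0,0,0,0]
noncomputable def A32 : M6 := !![0,0,0,0,0,0; 0,0,0,0,0,0; 0,1,0,0,0,0; 0,0,0,0,0,0; 0,0,0,0,0,-1; 0,0,0,0,0,0]
noncomputable def W1 : M6 := !![0,0,0,-1,0,0; 0,0,0,0,0,0; 0,0,0,0,0,0; 1,0,0,0,0,0; 0,0,0,0,0,0; 0,0,0,0,0,0]
noncomputable def W2 : M6 := !![0,0,0,0,0,0; 0,0,0,0,-1,0; 0,0,0,0,0,0; 0,0,0,0,0,0; 0,1,0,0,0,0; 0,0,0,0,0,0]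

noncomputable def gens : Set M6 := {E1, E2, E3, E31, E32, A1, A2, A3, A31, A32, W1, W2}

attribute [local instance 100] LieRing.ofAssociativeRing

noncomputable def gLie : LieSubalgebra ℝ M6 := LieSubalgebra.lieSpan ℝ M6 gens

/-- The solvable subalgebra b = span{E1,E2,E3,E31,E32,A1,A2,A3,A31,A32}. -/
noncomputable def bSub : Submodule ℝ M6 :=
  Submodule.span ℝ {E1, E2, E3, E31, E32, A1, A2, A3, A31, A32}

/-- The connected group B = exp(b), realized as the subgroup of invertible 6×6
matrices generated by exponentials of elements of b. -/
noncomputable def Bgrp : Subgroup M6ˣ :=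
  Subgroup.closure {u : M6ˣ | ∃ x ∈ bSub, (u : M6) = NormedSpace.exp x}

/-- The restriction to b of the linear form E1* + E2* + E3* (values 1 on
E1, E2, E3 and 0 on the remaining basis vectors of b), written via matrix
entries. -/
noncomputable def fpos (x : M6) : ℝ := x 0 3 + x 3 0 + x 1 4 + x 4 1 + x 2 5

/-
Every `x ∈ b` has `E3` as a common eigenvector of left and right multiplication, with opposite
eigenvalues: `x E3 = λ E3` and `E3 x = -λ E3`. Hence `exp(-x) E3 exp x = e^{-2λ} E3`, so every
generator of `B`, and therefore all of `B`, rescales `E3` by a positive factor under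
conjugation. A form with `η(E3) > 0` keeps its sign along the coadjoint orbit, while the two
forms `∓(E1* + E2* + E3*)` take the values `∓1` at `E3`.
-/

open NormedSpace

section RayStabilizer

variable {A : Type*} [Ring A] [Algebra ℝ A]

def conjRayStabilizer (v : A) : Subgroup Aˣ where
  carrier := {g | ∃ c : ℝ, 0 < c ∧ (↑g⁻¹ : A) * v * g = c • v}
  one_mem' := ⟨1, one_pos, by simp⟩
  mul_mem' := by
    rintro a b ⟨c, hc, ha⟩ ⟨c', hc', hb⟩
    refine ⟨c * c', mul_pos hc hc', ?_⟩
    calc (↑(a * b)⁻¹ : A) * v * ↑(a * b) = ↑b⁻¹ * (↑a⁻¹ * v * ↑a) * ↑b := by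
          simp only [_root_.mul_inv_rev, Units.val_mul, mul_assoc]
      _ = (c * c') • v := by rw [ha, mul_smul_comm, smul_mul_assoc, hb, smul_smul]
  inv_mem' := by
    rintro a ⟨c, hc, ha⟩
    refine ⟨c⁻¹, inv_pos.mpr hc, ?_⟩
    have hv : v = c • ((↑a : A) * v * ↑a⁻¹) := by
      calc v = ↑a * (↑a⁻¹ * v * ↑a) * ↑a⁻¹ := by simp [mul_assoc]
        _ = c • ((↑a : A) * v * ↑a⁻¹) := by
          rw [ha, mul_smul_comm, smul_mul_assoc]
    rw [inv_inv, hv, smul_smul, inv_mul_cancel₀ hc.ne', one_smul, ← hv]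

end RayStabilizer

section Exponential

variable {A : Type*} [NormedRing A] [NormedAlgebra ℝ A] [CompleteSpace A]

theorem exp_mul_eq_smul_of_mul_eq_smul {x v : A} {l : ℝ} (h : x * v = l • v) :
    exp x * v = Real.exp l • v := by
  -- `exp` does not depend on the `ℚ`-algebra structure; the library's `exp` API asks for one.
  let := NormedAlgebra.restrictScalars ℚ ℝ A
  have hv : SemiconjBy v (algebraMap ℝ A l) x := by
    rw [SemiconjBy, Algebra.algebraMap_eq_smul_one, mul_smul_one, h]
  rw [← hv.exp_right.eq, ← algebraMap_exp_comm, ← Real.exp_eq_exp_ℝ,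
    Algebra.algebraMap_eq_smul_one, mul_smul_one]

theorem mul_exp_eq_smul_of_mul_eq_smul {x v : A} {l : ℝ} (h : v * x = l • v) :
    v * exp x = Real.exp l • v := by
  let := NormedAlgebra.restrictScalars ℚ ℝ A
  have hv : SemiconjBy v x (algebraMap ℝ A l) := by
    rw [SemiconjBy, Algebra.algebraMap_eq_smul_one, smul_one_mul, h]
  rw [hv.exp_right.eq, ← algebraMap_exp_comm, ← Real.exp_eq_exp_ℝ,
    Algebra.algebraMap_eq_smul_one, smul_one_mul]

theorem Units.val_inv_eq_exp_neg {u : Aˣ} {x : A} (hu : (u : A) = exp x) :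
    (↑u⁻¹ : A) = exp (-x) := by
  let := NormedAlgebra.restrictScalars ℚ ℝ A
  refine Units.inv_eq_of_mul_eq_one_right ?_
  rw [hu, ← exp_add_of_commute (Commute.refl x).neg_right, add_neg_cancel, exp_zero]

theorem mem_conjRayStabilizer_of_val_eq_exp {x v : A} {l : ℝ} (hxv : x * v = l • v)
    (hvx : v * x = -l • v) {u : Aˣ} (hu : (u : A) = exp x) : u ∈ conjRayStabilizer v := by
  have hneg : -x * v = -l • v := by rw [neg_mul, hxv, neg_smul]
  refine ⟨Real.exp (-l) * Real.exp (-l), by positivity, ?_⟩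
  rw [Units.val_inv_eq_exp_neg hu, exp_mul_eq_smul_of_mul_eq_smul hneg, smul_mul_assoc, hu,
    mul_exp_eq_smul_of_mul_eq_smul hvx, smul_smul]

end Exponential

namespace Matrix

variable {m n α : Type*} [DecidableEq m] [DecidableEq n] [CommSemiring α]

theorem mul_single_eq_smul [Fintype m] {M : Matrix m m α} {i : m} (hM : ∀ k ≠ i, M k i = 0)
    (j : n) (c : α) :
    M * single i j c = M i i • single i j c := by
  ext a b
  by_cases hb : b = j
  · subst hb
    by_cases ha : a = i
    · subst ha; simp [mul_comm]
    · simp [hM a ha, Ne.symm ha]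
  · simp [hb, Ne.symm hb]

theorem single_mul_eq_smul [Fintype n] {M : Matrix n n α} {j : n} (hM : ∀ k ≠ j, M j k = 0)
    (i : m) (c : α) :
    single i j c * M = M j j • single i j c := by
  ext a b
  by_cases ha : a = i
  · subst ha
    by_cases hb : b = j
    · subst hb; simp [mul_comm]
    · simp [hM b hb, Ne.symm hb]
  · simp [ha, Ne.symm ha]

end Matrix

theorem E3_eq_single : E3 = Matrix.single 2 5 1 := by
  ext i j; fin_cases i <;> fin_cases j <;> simp [E3]

theorem E3_mem_bSub : E3 ∈ bSub :=
  Submodule.subset_span (by simp)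

theorem entries_of_mem_bSub {x : M6} (hx : x ∈ bSub) :
    (∀ k ≠ 2, x k 2 = 0) ∧ (∀ k ≠ 5, x 5 k = 0) ∧ x 5 5 = -x 2 2 := by
  induction hx using Submodule.span_induction with
  | mem z hz =>
    simp only [Set.mem_insert_iff, Set.mem_singleton_iff] at hz
    rcases hz with rfl | rfl | rfl | rfl | rfl | rfl | rfl | rfl | rfl | rfl <;>
    refine ⟨fun k hk => ?_, fun k hk => ?_, ?_⟩ <;>
    first
    | (fin_cases k <;> simp [E1, E2, E3, E31, E32, A1, A2, A3, A31, A32] at hk ⊢)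
    | (simp [E1, E2, E3, E31, E32, A1, A2, A3, A31, A32] <;> norm_num)
  | zero => simp
  | add a b _ _ ha hb =>
    exact ⟨fun k hk => by simp [ha.1 k hk, hb.1 k hk],
      fun k hk => by simp [ha.2.1 k hk, hb.2.1 k hk],
      by simp only [Matrix.add_apply, ha.2.2, hb.2.2, neg_add]⟩
  | smul c a _ ha =>
    exact ⟨fun k hk => by simp [ha.1 k hk], fun k hk => by simp [ha.2.1 k hk], by simp [ha.2.2]⟩

theorem mul_E3_of_mem_bSub {x : M6} (hx : x ∈ bSub) :
    x * E3 = x 2 2 • E3 ∧ E3 * x = -x 2 2 • E3 := by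
  obtain ⟨hcol, hrow, hdiag⟩ := entries_of_mem_bSub hx
  rw [E3_eq_single, Matrix.mul_single_eq_smul hcol, Matrix.single_mul_eq_smul hrow, hdiag]
  exact ⟨rfl, rfl⟩

section MatrixExponential

attribute [local instance] Matrix.linftyOpNormedRing Matrix.linftyOpNormedAlgebra

theorem Bgrp_le_conjRayStabilizer : Bgrp ≤ conjRayStabilizer E3 := by
  refine (Subgroup.closure_le _).2 ?_
  rintro u ⟨x, hx, hu⟩
  obtain ⟨hxE, hEx⟩ := mul_E3_of_mem_bSub hx
  exact mem_conjRayStabilizer_of_val_eq_exp hxE hEx hu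

end MatrixExponential

theorem fpos_smul_E3 (r : ℝ) : fpos (r • E3) = r := by
  simp [fpos, E3]

theorem coadjoint_positivity_and_disjoint_orbits :
    -- every coadjoint transform of a linear form η with η(E3) > 0 again pairs
    -- positively with E3 (Ad*(g)η = η ∘ Ad(g⁻¹), Ad(g⁻¹)y = g⁻¹ y g)
    (∀ η : M6 →ₗ[ℝ] ℝ, 0 < η E3 →
      ∀ g ∈ Bgrp, 0 < η ((↑g⁻¹ : M6) * E3 * (↑g : M6))) ∧
    -- hence the coadjoint B-orbits of −(E1*+E2*+E3*)|_b and (E1*+E2*+E3*)|_b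
    -- are disjoint: no common coadjoint transform, as forms on b
    ¬ ∃ g ∈ Bgrp, ∃ g' ∈ Bgrp, ∀ y ∈ bSub,
        -fpos ((↑g⁻¹ : M6) * y * (↑g : M6)) = fpos ((↑g'⁻¹ : M6) * y * (↑g' : M6)) := by
  refine ⟨fun η hη g hg => ?_, ?_⟩
  · obtain ⟨c, hc, hgE⟩ := Bgrp_le_conjRayStabilizer hg
    rw [hgE, map_smul, smul_eq_mul]
    exact mul_pos hc hη
  · rintro ⟨g, hg, g', hg', h⟩
    obtain ⟨c, hc, hgE⟩ := Bgrp_le_conjRayStabilizer hg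
    obtain ⟨c', hc', hg'E⟩ := Bgrp_le_conjRayStabilizer hg'
    have hE3 := h E3 E3_mem_bSub
    rw [hgE, hg'E, fpos_smul_E3, fpos_smul_E3] at hE3
    linarith
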